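/- Let Y be an open subset of ℝ^q (q ∈ ℕ), F a real normed space, and n ∈ ℕ ∪ {0}. Suppose f ∈ C^n(Y,F) satisfies f(y) ≠ 0 for all y ∈ Y, and φ : Y → ℝ is a function such that the product y ↦ φ(y)·f(y) belongs to C^n(Y,F). Then φ ∈ C^n(Y,ℝ). -/

import Mathlib

open Set Filter Topology

section

variable {𝕜 E F : Type*} [RCLike 𝕜] [NormedAddCommGroup E] [NormedSpace 𝕜 E]
  [NormedAddCommGroup F] [NormedSpace 𝕜 F] {n : WithTop ℕ∞} {φ : E → 𝕜} {g : E → F}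
  {s : Set E} {y : E}

/-- Near `y`, `φ = L (φ • g) / L g` for a functional `L` with `L (g y) ≠ 0` (Hahn–Banach). -/
theorem ContDiffWithinAt.of_smul_of_ne_zero (hg : ContDiffWithinAt 𝕜 n g s y) (hgy : g y ≠ 0)
    (hφg : ContDiffWithinAt 𝕜 n (fun x => φ x • g x) s y) : ContDiffWithinAt 𝕜 n φ s y := by
  obtain ⟨L, -, hLy⟩ := exists_dual_vector 𝕜 (g y) (norm_ne_zero_iff.mpr hgy)
  have hLg : ContDiffWithinAt 𝕜 n (fun x => L (g x)) s y := L.contDiff.comp_contDiffWithinAt hg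
  have hLgy : L (g y) ≠ 0 := by
    rw [hLy]
    exact_mod_cast norm_ne_zero_iff.mpr hgy
  have hquot : ContDiffWithinAt 𝕜 n (fun x => L (φ x • g x) / L (g x)) s y :=
    (L.contDiff.comp_contDiffWithinAt hφg).div hLg hLgy
  have hLg_ne : ∀ᶠ x in 𝓝[s] y, L (g x) ≠ 0 :=
    hLg.continuousWithinAt.eventually_ne hLgy
  have hφ_eq : ∀ x, L (g x) ≠ 0 → φ x = L (φ x • g x) / L (g x) := fun x hx => by
    rw [map_smul, smul_eq_mul, mul_div_assoc, div_self hx, mul_one]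
  exact hquot.congr_of_eventuallyEq (hLg_ne.mono hφ_eq) (hφ_eq y hLgy)

theorem ContDiffOn.of_smul_of_ne_zero (hg : ContDiffOn 𝕜 n g s) (hgs : ∀ x ∈ s, g x ≠ 0)
    (hφg : ContDiffOn 𝕜 n (fun x => φ x • g x) s) : ContDiffOn 𝕜 n φ s := fun x hx =>
  (hg x hx).of_smul_of_ne_zero (hgs x hx) (hφg x hx)

end

theorem product_rule_lemma {q : ℕ} (Y : Set (Fin q → ℝ)) (n : ℕ)
    {F : Type*} [NormedAddCommGroup F] [NormedSpace ℝ F]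
    (f : (Fin q → ℝ) → F) (hf : ContDiffOn ℝ n f Y) (hfz : ∀ y ∈ Y, f y ≠ 0)
    (φ : (Fin q → ℝ) → ℝ) (hφf : ContDiffOn ℝ n (fun y => φ y • f y) Y) :
    ContDiffOn ℝ n φ Y :=
  hf.of_smul_of_ne_zero hfz hφf
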